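/- Let H be a group in which commutators are central (i.e. H is nilpotent of class at most 2) and in which every element of finite order is trivial (H is torsion-free). If H is virtually abelian (it has an abelian subgroup of finite index), then H is abelian. -/

import Mathlib

/-!
When commutators are central, `⁅g, h⁆` is bimultiplicative, so `⁅g ^ m, h ^ n⁆ = ⁅g, h⁆ ^ (m * n)`.
Every element has a positive power in the abelian subgroup of finite index, so some positive
power of each commutator is trivial, and torsion-freeness forces the commutator itself to be trivial.
-/

open scoped commutatorElement

section CommutatorPow

variable {G : Type*} [Group G]

theorem commutatorElement_pow_left {g h : G} (hc : Commute g ⁅g, h⁆) (n : ℕ) :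
    ⁅g ^ n, h⁆ = ⁅g, h⁆ ^ n := by
  induction n with
  | zero => simp
  | succ n ih =>
    rw [pow_succ', commutatorElement_mul_left_eq_conj_mul, ih, (hc.pow_right n).eq,
      mul_inv_cancel_right, pow_succ]

theorem commutatorElement_pow_right {g h : G} (hc : Commute h ⁅g, h⁆) (n : ℕ) :
    ⁅g, h ^ n⁆ = ⁅g, h⁆ ^ n := by
  have hc' : Commute h ⁅h, g⁆ := by rw [← commutatorElement_inv]; exact hc.inv_right
  rw [← commutatorElement_inv, commutatorElement_pow_left hc', ← commutatorElement_inv, inv_pow,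
    inv_inv]

theorem commutatorElement_pow_pow (hG : ∀ g h : G, ⁅g, h⁆ ∈ Subgroup.center G) (g h : G)
    (m n : ℕ) : ⁅g ^ m, h ^ n⁆ = ⁅g, h⁆ ^ (m * n) := by
  have hcomm (x y z : G) : Commute z ⁅x, y⁆ := Subgroup.mem_center_iff.mp (hG x y) z
  rw [commutatorElement_pow_right (hcomm _ _ h), commutatorElement_pow_left (hcomm _ _ g), pow_mul]

theorem commutatorElement_pow_mul_eq_one_of_commute_pow
    (hG : ∀ g h : G, ⁅g, h⁆ ∈ Subgroup.center G) {g h : G} {m n : ℕ}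
    (hgh : Commute (g ^ m) (h ^ n)) : ⁅g, h⁆ ^ (m * n) = 1 :=
  (commutatorElement_pow_pow hG g h m n).symm.trans (commutatorElement_eq_one_iff_commute.mpr hgh)

end CommutatorPow

theorem virtually_abelian_of_class_two_torsion_free (H : Type*) [Group H]
    (hcentral : ∀ g h x : H, (g * h * g⁻¹ * h⁻¹) * x = x * (g * h * g⁻¹ * h⁻¹))
    (htf : ∀ g : H, ∀ n : ℕ, 1 ≤ n → g ^ n = 1 → g = 1)
    (hva : ∃ A : Subgroup H, A.index ≠ 0 ∧ ∀ a b : A, a * b = b * a) :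
    ∀ g h : H, g * h = h * g := by
  obtain ⟨A, hA, hAcomm⟩ := hva
  have hcenter : ∀ g h : H, ⁅g, h⁆ ∈ Subgroup.center H := fun g h =>
    Subgroup.mem_center_iff.mpr fun x => (hcentral g h x).symm
  intro g h
  obtain ⟨m, hm, -, hgm⟩ := Subgroup.exists_pow_mem_of_index_ne_zero hA g
  obtain ⟨n, hn, -, hhn⟩ := Subgroup.exists_pow_mem_of_index_ne_zero hA h
  have hpow : Commute (g ^ m) (h ^ n) := congrArg Subtype.val (hAcomm ⟨_, hgm⟩ ⟨_, hhn⟩)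
  have htriv : ⁅g, h⁆ = 1 := htf _ (m * n) (Nat.mul_pos hm hn)
    (commutatorElement_pow_mul_eq_one_of_commute_pow hcenter hpow)
  exact commutatorElement_eq_one_iff_mul_comm.mp htriv
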